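/- arXiv:2303.12435 — 5 statements merged into one kernel-verified Lean document; each statement's English description precedes it below -/
import Mathlib

section
/- Let g : [0,∞) → ℝ be continuous. For r > 0 and ω ∈ ℝ, let φ_{r,ω} be the maximal solution of φ′(t) = r(φ(t)² + 1) + 2 (g(t) − ω) φ(t) with φ(0) = 0, and define a*(r, ω) ∈ (0, +∞] as the first time t > 0 with φ_{r,ω}(t) = 1 (a* = +∞ if φ never reaches 1). Then: (i) for fixed ω, a*(·, ω) is decreasing in r, i.e. 0 < r₁ ≤ r₂ implies a*(r₂, ω) ≤ a*(r₁, ω); (ii) for fixed r, a*(r, ·) is increasing in ω, i.e. ω₁ ≤ ω₂ implies a*(r, ω₁) ≤ a*(r, ω₂). -/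
/-!
Raising `r` or lowering `ω` increases the Riccati field `r(x² + 1) + 2(g t − ω)x` at every
`x ≥ 0`, and the solution through `0` stays nonnegative because the field equals `r > 0` at
`x = 0`. Hence a solution `φ` for `(r₁, ω₁)` that first reaches `1` at time `a` is, on `[0, a]`,
a subsolution for `(r₂, ω₂)`. The comparison principle for Lipschitz fields then puts the
solution `ψ` for `(r₂, ω₂)` above `φ`, so `ψ` reaches `1` at some time `b ≤ a`. To have `ψ` on
all of `[0, a]`, the field is truncated to `x ∈ [0, 1]`, where it is Lipschitz and bounded; the
truncation is invisible to `ψ` up to its first hitting time, since `0 ≤ φ ≤ ψ ≤ 1` there.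
-/

open Set Real
open scoped NNReal

/-- `a` is the first time at which the (maximal) solution of
`φ′ = r(φ² + 1) + 2(g − ω)φ`, `φ(0) = 0`, reaches the value `1`. -/
def IsFirstHit (g : ℝ → ℝ) (r ω a : ℝ) : Prop :=
  0 < a ∧ ∃ φ : ℝ → ℝ, φ 0 = 0 ∧
    (∀ t ∈ Icc (0:ℝ) a,
      HasDerivWithinAt φ (r * (φ t ^ 2 + 1) + 2 * (g t - ω) * φ t) (Icc 0 a) t) ∧
    φ a = 1 ∧ ∀ t ∈ Ico (0:ℝ) a, φ t < 1

/-- The first hitting time `a*(r, ω) ∈ (0, +∞]` of the value `1` by the maximal solution,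
with the convention `a* = +∞` (i.e. `sInf ∅ = ⊤`) if `φ` never reaches `1`. -/
noncomputable def aStar (g : ℝ → ℝ) (r ω : ℝ) : ENNReal :=
  sInf {x : ENNReal | ∃ a : ℝ, IsFirstHit g r ω a ∧ x = ENNReal.ofReal a}

theorem exists_hasDerivWithinAt_of_lipschitzWith {E : Type*} [NormedAddCommGroup E]
    [NormedSpace ℝ E] [CompleteSpace E] {f : ℝ → E → E} {a b : ℝ} {K C : ℝ≥0} (hab : a ≤ b)
    (hlip : ∀ t ∈ Icc a b, LipschitzWith K (f t))
    (hcont : ∀ x, ContinuousOn (f · x) (Icc a b))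
    (hbound : ∀ t ∈ Icc a b, ∀ x, ‖f t x‖ ≤ C) (x₀ : E) :
    ∃ α : ℝ → E, α a = x₀ ∧ ∀ t ∈ Icc a b, HasDerivWithinAt α (f t (α t)) (Icc a b) t :=
  IsPicardLindelof.exists_eq_forall_mem_Icc_hasDerivWithinAt₀
    (t₀ := ⟨a, left_mem_Icc.2 hab⟩) (a := C * (b - a).toNNReal) (L := C)
    { lipschitzOnWith := fun t ht => (hlip t ht).lipschitzOnWith
      continuousOn := fun x _ => hcont x
      norm_le := fun t ht x _ => hbound t ht x
      mul_max_le := by simp [hab] }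

theorem le_of_hasDerivWithinAt_le_of_lipschitzWith {v : ℝ → ℝ → ℝ} {φ ψ φ' : ℝ → ℝ}
    {a b : ℝ} {K : ℝ≥0} (hv : ∀ t ∈ Icc a b, LipschitzWith K (v t))
    (hφ : ∀ t ∈ Icc a b, HasDerivWithinAt φ (φ' t) (Icc a b) t)
    (hψ : ∀ t ∈ Icc a b, HasDerivWithinAt ψ (v t (ψ t)) (Icc a b) t)
    (hsub : ∀ t ∈ Icc a b, φ' t ≤ v t (φ t)) (ha : φ a ≤ ψ a) :
    ∀ t ∈ Icc a b, φ t ≤ ψ t := by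
  set u := fun t => φ t - ψ t
  have hu : ∀ t ∈ Icc a b, HasDerivWithinAt u (φ' t - v t (ψ t)) (Icc a b) t :=
    fun t ht => (hφ t ht).sub (hψ t ht)
  -- `u` stays below every barrier `ε e^{(K+1)(t-a)}`, since `u' ≤ K u` wherever `u > 0`.
  have hbarrier : ∀ ε > 0, ∀ t ∈ Icc a b, u t ≤ ε * exp ((K + 1) * (t - a)) := by
    intro ε hε
    refine image_le_of_deriv_right_lt_deriv_boundary (fun t ht => (hu t ht).continuousWithinAt)
      (fun t ht => (hu t (Ico_subset_Icc_self ht)).mono_of_mem_nhdsWithin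
        (Icc_mem_nhdsGE_of_mem ht))
      (by simp only [u, sub_self, mul_zero, exp_zero, mul_one]; linarith)
      (fun t => (((hasDerivAt_id t).sub_const a).const_mul (K + 1 : ℝ)).exp.const_mul ε) ?_
    intro t ht hut
    have hlip : v t (φ t) - v t (ψ t) ≤ K * |u t| := by
      simpa [Real.dist_eq] using
        (le_abs_self _).trans ((hv t (Ico_subset_Icc_self ht)).dist_le_mul (φ t) (ψ t))
    have hpos : 0 < ε * exp ((K + 1) * (t - a)) := by positivity
    rw [hut, abs_of_pos hpos] at hlip
    have hsubt := hsub t (Ico_subset_Icc_self ht)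
    simp only [id, mul_one]
    nlinarith
  intro t ht
  refine le_of_forall_pos_le_add fun ε hε => ?_
  have hexp : 0 < exp ((K + 1) * (t - a)) := exp_pos _
  have hut := hbarrier (ε / exp ((K + 1) * (t - a))) (by positivity) t ht
  rw [div_mul_cancel₀ _ hexp.ne'] at hut
  linarith

theorem nonneg_of_hasDerivWithinAt_pos_of_eq_zero {φ φ' : ℝ → ℝ} {a b : ℝ}
    (hφ : ∀ t ∈ Icc a b, HasDerivWithinAt φ (φ' t) (Icc a b) t) (ha : 0 ≤ φ a)
    (hpos : ∀ t ∈ Icc a b, φ t = 0 → 0 < φ' t) :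
    ∀ t ∈ Icc a b, 0 ≤ φ t := by
  have hfence := image_le_of_deriv_right_lt_deriv_boundary (f := fun t => -φ t) (B := 0) (B' := 0)
    (fun t ht => (hφ t ht).continuousWithinAt.neg)
    (fun t ht => ((hφ t (Ico_subset_Icc_self ht)).neg).mono_of_mem_nhdsWithin
      (Icc_mem_nhdsGE_of_mem ht)) (by simpa using ha) (fun t => hasDerivAt_const t 0)
    (fun t ht h => by simpa using hpos t (Ico_subset_Icc_self ht) (neg_eq_zero.1 h))
  exact fun t ht => by simpa using hfence ht

theorem exists_mem_Ioc_eq_forall_lt {f : ℝ → ℝ} {a b c : ℝ} (hab : a ≤ b)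
    (hf : ContinuousOn f (Icc a b)) (ha : f a < c) (hb : c ≤ f b) :
    ∃ t ∈ Ioc a b, f t = c ∧ ∀ s ∈ Ico a t, f s < c := by
  set S := Icc a b ∩ f ⁻¹' Ici c
  have hSb : BddBelow S := ⟨a, fun x hx => hx.1.1⟩
  have htS : sInf S ∈ S := (hf.preimage_isClosed_of_isClosed isClosed_Icc isClosed_Ici).csInf_mem
    ⟨b, right_mem_Icc.2 hab, hb⟩ hSb
  obtain ⟨⟨hat, htb⟩, hct⟩ := htS
  have hlt : ∀ s ∈ Ico a (sInf S), f s < c := fun s hs => not_le.1 fun hcs =>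
    hs.2.not_ge (csInf_le hSb ⟨⟨hs.1, hs.2.le.trans htb⟩, hcs⟩)
  obtain ⟨s, hs, hfs⟩ :=
    intermediate_value_Icc hat (hf.mono (Icc_subset_Icc_right htb)) ⟨ha.le, hct⟩
  have hst : s = sInf S := le_antisymm hs.2 (csInf_le hSb ⟨⟨hs.1, hs.2.trans htb⟩, hfs.ge⟩)
  exact ⟨sInf S, ⟨hat.lt_of_ne fun h => ha.not_ge (h ▸ hct), htb⟩, hst ▸ hfs, hlt⟩

theorem le_of_mem_Icc_of_forall_mem_Ico_lt {α β : Type*} [LinearOrder α] [Preorder β]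
    {f : α → β} {a b t : α} {c : β} (hb : f b = c)
    (hlt : ∀ s ∈ Ico a b, f s < c) (ht : t ∈ Icc a b) : f t ≤ c :=
  ht.2.eq_or_lt.elim (fun h => (h ▸ hb).le) fun h => (hlt t ⟨ht.1, h⟩).le

def riccatiField (g : ℝ → ℝ) (r ω t x : ℝ) : ℝ := r * (x ^ 2 + 1) + 2 * (g t - ω) * x

noncomputable def truncRiccatiField (g : ℝ → ℝ) (r ω t x : ℝ) : ℝ :=
  riccatiField g r ω t (projIcc 0 1 zero_le_one x)

section
variable {g : ℝ → ℝ} {r ω t x y : ℝ}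

theorem riccatiField_le_riccatiField {r₁ r₂ ω₁ ω₂ : ℝ} (hx : 0 ≤ x) (hr : r₁ ≤ r₂)
    (hω : ω₂ ≤ ω₁) : riccatiField g r₁ ω₁ t x ≤ riccatiField g r₂ ω₂ t x := by
  unfold riccatiField
  nlinarith [mul_nonneg (sub_nonneg.2 hr) (add_pos_of_nonneg_of_pos (sq_nonneg x) one_pos).le,
    mul_nonneg (sub_nonneg.2 hω) hx]

theorem truncRiccatiField_of_mem (hx : x ∈ Icc 0 1) :
    truncRiccatiField g r ω t x = riccatiField g r ω t x := by
  rw [truncRiccatiField, projIcc_of_mem _ hx]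

theorem abs_riccatiField_sub_le (hr : 0 ≤ r) (hx : x ∈ Icc 0 1) (hy : y ∈ Icc 0 1) :
    |riccatiField g r ω t x - riccatiField g r ω t y| ≤ (2 * r + 2 * |g t - ω|) * |x - y| := by
  have hfac : riccatiField g r ω t x - riccatiField g r ω t y
      = (r * (x + y) + 2 * (g t - ω)) * (x - y) := by
    unfold riccatiField; ring
  have hsum : |r * (x + y) + 2 * (g t - ω)| ≤ 2 * r + 2 * |g t - ω| := by
    refine (abs_add_le _ _).trans (add_le_add ?_ ?_)
    · rw [abs_mul, abs_of_nonneg hr, abs_of_nonneg (by linarith [hx.1, hy.1])]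
      nlinarith [hx.2, hy.2]
    · rw [abs_mul, abs_two]
  rw [hfac, abs_mul]
  exact mul_le_mul_of_nonneg_right hsum (abs_nonneg _)

theorem abs_riccatiField_le (hr : 0 ≤ r) (hx : x ∈ Icc 0 1) :
    |riccatiField g r ω t x| ≤ 2 * r + 2 * |g t - ω| := by
  refine (abs_add_le _ _).trans (add_le_add ?_ ?_)
  · rw [abs_of_nonneg (by positivity)]
    nlinarith [mul_le_mul hx.2 hx.2 hx.1 zero_le_one]
  · rw [abs_mul, abs_mul, abs_two, abs_of_nonneg hx.1]
    nlinarith [hx.2, abs_nonneg (g t - ω)]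

theorem continuousOn_truncRiccatiField {s : Set ℝ} (hg : ContinuousOn g s) :
    ContinuousOn (truncRiccatiField g r ω · x) s := by
  unfold truncRiccatiField riccatiField
  fun_prop

theorem exists_lipschitzWith_truncRiccatiField {s : Set ℝ} (hs : IsCompact s)
    (hg : ContinuousOn g s) (hr : 0 ≤ r) :
    ∃ K : ℝ≥0, ∀ t ∈ s, LipschitzWith K (truncRiccatiField g r ω t) ∧
      ∀ x, ‖truncRiccatiField g r ω t x‖ ≤ K := by
  obtain ⟨M, hM⟩ := hs.exists_bound_of_continuousOn (hg.sub (continuousOn_const (c := ω)))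
  have hK : ∀ t ∈ s, 2 * r + 2 * |g t - ω| ≤ (2 * r + 2 * M).toNNReal := fun t ht => by
    have : |g t - ω| ≤ M := hM t ht
    exact (by linarith : 2 * r + 2 * |g t - ω| ≤ 2 * r + 2 * M).trans (Real.le_coe_toNNReal _)
  refine ⟨(2 * r + 2 * M).toNNReal, fun t ht => ⟨LipschitzWith.of_dist_le_mul fun x y => ?_,
    fun x => (abs_riccatiField_le hr (projIcc 0 1 zero_le_one x).2).trans (hK t ht)⟩⟩
  have hproj := (LipschitzWith.projIcc (zero_le_one' ℝ)).dist_le_mul x y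
  rw [NNReal.coe_one, one_mul, Subtype.dist_eq] at hproj
  rw [Real.dist_eq, Real.dist_eq] at hproj ⊢
  exact (abs_riccatiField_sub_le hr (projIcc 0 1 _ x).2 (projIcc 0 1 _ y).2).trans
    (mul_le_mul (hK t ht) hproj (abs_nonneg _) (by positivity))

theorem nonneg_of_hasDerivWithinAt_riccatiField {φ : ℝ → ℝ} {a : ℝ} (hr : 0 < r)
    (hφ0 : φ 0 = 0)
    (hφ : ∀ t ∈ Icc 0 a, HasDerivWithinAt φ (riccatiField g r ω t (φ t)) (Icc 0 a) t) :
    ∀ t ∈ Icc 0 a, 0 ≤ φ t :=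
  nonneg_of_hasDerivWithinAt_pos_of_eq_zero hφ hφ0.ge fun t _ h => by simpa [riccatiField, h]

end

theorem IsFirstHit.exists_le {g : ℝ → ℝ} (hg : ContinuousOn g (Ici 0)) {r₁ r₂ ω₁ ω₂ a : ℝ}
    (hr₁ : 0 < r₁) (hr : r₁ ≤ r₂) (hω : ω₂ ≤ ω₁) (h : IsFirstHit g r₁ ω₁ a) :
    ∃ b ≤ a, IsFirstHit g r₂ ω₂ b := by
  obtain ⟨ha, φ, hφ0, hφ, hφa, hφlt⟩ := h
  have hgI : ContinuousOn g (Icc 0 a) := hg.mono Icc_subset_Ici_self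
  have hφ01 : ∀ t ∈ Icc 0 a, φ t ∈ Icc 0 1 := fun t ht =>
    ⟨nonneg_of_hasDerivWithinAt_riccatiField hr₁ hφ0 hφ t ht,
      le_of_mem_Icc_of_forall_mem_Ico_lt hφa hφlt ht⟩
  obtain ⟨K, hK⟩ :=
    exists_lipschitzWith_truncRiccatiField (ω := ω₂) isCompact_Icc hgI (hr₁.trans_le hr).le
  obtain ⟨ψ, hψ0, hψ⟩ := exists_hasDerivWithinAt_of_lipschitzWith ha.le (fun t ht => (hK t ht).1)
    (fun _ => continuousOn_truncRiccatiField hgI) (fun t ht => (hK t ht).2) 0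
  have hφψ : ∀ t ∈ Icc 0 a, φ t ≤ ψ t :=
    le_of_hasDerivWithinAt_le_of_lipschitzWith (fun t ht => (hK t ht).1) hφ hψ
      (fun t ht => by
        rw [truncRiccatiField_of_mem (hφ01 t ht)]
        exact riccatiField_le_riccatiField (hφ01 t ht).1 hr hω)
      (by rw [hφ0, hψ0])
  obtain ⟨b, ⟨hb0, hba⟩, hψb, hψlt⟩ := exists_mem_Ioc_eq_forall_lt ha.le
    (fun t ht => (hψ t ht).continuousWithinAt) (by rw [hψ0]; exact one_pos)
    (hφa ▸ hφψ a (right_mem_Icc.2 ha.le))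
  refine ⟨b, hba, hb0, ψ, hψ0, fun t ht => ?_, hψb, hψlt⟩
  have hta : t ∈ Icc 0 a := ⟨ht.1, ht.2.trans hba⟩
  have hψt : ψ t ∈ Icc 0 1 :=
    ⟨(hφ01 t hta).1.trans (hφψ t hta), le_of_mem_Icc_of_forall_mem_Ico_lt hψb hψlt ht⟩
  have hψ' := (hψ t hta).mono (Icc_subset_Icc_right hba)
  rwa [truncRiccatiField_of_mem hψt] at hψ'

theorem aStar_le_aStar {g : ℝ → ℝ} (hg : ContinuousOn g (Ici 0)) {r₁ r₂ ω₁ ω₂ : ℝ}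
    (hr₁ : 0 < r₁) (hr : r₁ ≤ r₂) (hω : ω₂ ≤ ω₁) : aStar g r₂ ω₂ ≤ aStar g r₁ ω₁ := by
  refine sInf_le_sInf_of_isCoinitialFor ?_
  rintro _ ⟨a, ha, rfl⟩
  obtain ⟨b, hba, hb⟩ := ha.exists_le hg hr₁ hr hω
  exact ⟨_, ⟨b, hb, rfl⟩, ENNReal.ofReal_le_ofReal hba⟩

theorem statement5 (g : ℝ → ℝ) (hg : ContinuousOn g (Ici 0)) :
    (∀ ω : ℝ, ∀ r₁ r₂ : ℝ, 0 < r₁ → r₁ ≤ r₂ → aStar g r₂ ω ≤ aStar g r₁ ω) ∧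
    (∀ r : ℝ, 0 < r → ∀ ω₁ ω₂ : ℝ, ω₁ ≤ ω₂ → aStar g r ω₁ ≤ aStar g r ω₂) :=
  ⟨fun _ _ _ hr₁ hr => aStar_le_aStar hg hr₁ hr le_rfl,
    fun _ hr _ _ hω => aStar_le_aStar hg hr le_rfl hω⟩
end

section
/- For every z ∈ (−1, +∞) there exists a unique ν(z) ∈ (0, π) satisfying −ν(z) cot ν(z) = z (with the convention ν(z) cot ν(z) → 1 as ν → 0, so that ν can be extended continuously by ν(−1) = 0). Moreover ν is strictly increasing on (−1, +∞), one has z² + ν(z)² = (ν(z)/sin ν(z))², and the function z ↦ z² + ν(z)² is increasing on (−1, +∞). -/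
/-!
On `(0, π)` the function `-x cot x` has derivative `(x - sin x cos x) / sin² x > 0` and runs
from `-1` (since `sin x / x → 1`) to `+∞`, so it is an increasing bijection onto `(-1, ∞)` and
`ν` is its inverse. From `z = -ν cot ν` we get `z² + ν² = ν² (cot² ν + 1) = (ν / sin ν)²`, and
`x / sin x` is positive and increasing on `(0, π)` (its derivative has numerator
`sin x - x cos x > 0`, by `tan x > x` below `π / 2`), hence so is `z ↦ z² + ν(z)²`.
-/

open Set Real Filter Topology

noncomputable def negMulCot (x : ℝ) : ℝ := -(x * (cos x / sin x))

lemma strictMonoOn_Ioo_of_hasDerivAt_pos {a b : ℝ} {f f' : ℝ → ℝ}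
    (hf : ∀ x ∈ Ioo a b, HasDerivAt f (f' x) x) (hf' : ∀ x ∈ Ioo a b, 0 < f' x) :
    StrictMonoOn f (Ioo a b) := by
  refine strictMonoOn_of_hasDerivWithinAt_pos (f' := f') (convex_Ioo a b)
    (fun x hx => (hf x hx).continuousAt.continuousWithinAt) (fun x hx => ?_) (fun x hx => ?_)
  all_goals rw [interior_Ioo] at hx
  exacts [(hf x hx).hasDerivWithinAt, hf' x hx]

lemma hasDerivAt_negMulCot {x : ℝ} (hx : sin x ≠ 0) :
    HasDerivAt negMulCot ((x - sin x * cos x) / sin x ^ 2) x := by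
  refine ((hasDerivAt_id x).mul ((hasDerivAt_cos x).div (hasDerivAt_sin x) hx)).neg.congr_deriv ?_
  simp only [Pi.div_apply, id]
  field_simp
  linear_combination x * sin_sq_add_cos_sq x

lemma sin_mul_cos_lt_self {x : ℝ} (hx : 0 < x) : sin x * cos x < x := by
  have := sin_lt (by positivity : 0 < 2 * x)
  rw [sin_two_mul] at this
  linarith

lemma strictMonoOn_negMulCot : StrictMonoOn negMulCot (Ioo 0 π) :=
  strictMonoOn_Ioo_of_hasDerivAt_pos
    (fun x hx => hasDerivAt_negMulCot (sin_pos_of_mem_Ioo hx).ne')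
    (fun x hx => div_pos (by linarith [sin_mul_cos_lt_self hx.1])
      (pow_pos (sin_pos_of_mem_Ioo hx) 2))

lemma mul_cos_lt_sin {x : ℝ} (hx : x ∈ Ioo 0 π) : x * cos x < sin x := by
  have hsin := sin_pos_of_mem_Ioo hx
  rcases lt_or_ge x (π / 2) with hlt | hge
  · have hcos : 0 < cos x := cos_pos_of_mem_Ioo ⟨by linarith [hx.1, pi_pos], hlt⟩
    have := lt_tan hx.1 hlt
    rwa [tan_eq_sin_div_cos, lt_div_iff₀ hcos] at this
  · have hcos : cos x ≤ 0 := cos_nonpos_of_pi_div_two_le_of_le hge (by linarith [hx.2])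
    nlinarith [hx.1]

lemma strictMonoOn_div_sin : StrictMonoOn (fun x => x / sin x) (Ioo 0 π) :=
  strictMonoOn_Ioo_of_hasDerivAt_pos
    (fun x hx => ((hasDerivAt_id x).div (hasDerivAt_sin x) (sin_pos_of_mem_Ioo hx).ne'))
    (fun x hx => div_pos (by simpa using mul_cos_lt_sin hx) (pow_pos (sin_pos_of_mem_Ioo hx) 2))

lemma tendsto_negMulCot_nhdsGT_zero : Tendsto negMulCot (𝓝[>] 0) (𝓝 (-1)) := by
  have hsinc : Tendsto sinc (𝓝[>] 0) (𝓝 1) := by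
    simpa using continuous_sinc.continuousWithinAt.tendsto (s := Ioi 0) (x := 0)
  have hcos : Tendsto cos (𝓝[>] 0) (𝓝 1) := by
    simpa using continuous_cos.continuousWithinAt.tendsto (s := Ioi 0) (x := 0)
  have := (hcos.div hsinc one_ne_zero).neg
  rw [div_one] at this
  refine this.congr' ?_
  filter_upwards [self_mem_nhdsWithin] with x hx
  rw [Pi.div_apply, sinc_of_ne_zero (ne_of_gt hx), negMulCot]
  field_simp

lemma tendsto_negMulCot_nhdsLT_pi : Tendsto negMulCot (𝓝[<] π) atTop := by
  have hsin : Tendsto sin (𝓝[<] π) (𝓝[>] 0) := by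
    apply tendsto_nhdsWithin_of_tendsto_nhds_of_eventually_within
    · simpa using continuous_sin.continuousWithinAt.tendsto (s := Iio π) (x := π)
    · filter_upwards [Ioo_mem_nhdsLT pi_pos] with x hx
      exact sin_pos_of_mem_Ioo hx
  have hnum : Tendsto (-(id * cos)) (𝓝[<] π) (𝓝 π) := by
    simpa using (continuous_id.mul continuous_cos).neg.continuousWithinAt.tendsto
      (s := Iio π) (x := π)
  refine (hsin.inv_tendsto_nhdsGT_zero.atTop_mul_pos pi_pos hnum).congr fun x => ?_
  simp only [Pi.inv_apply, Pi.neg_apply, Pi.mul_apply, id, negMulCot]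
  ring

lemma Ioi_subset_image_negMulCot : Ioi (-1) ⊆ negMulCot '' Ioo 0 π :=
  isPreconnected_Ioo.intermediate_value_Ioi
    (le_principal_iff.2 (Ioo_mem_nhdsGT pi_pos)) (le_principal_iff.2 (Ioo_mem_nhdsLT pi_pos))
    (fun _ hx =>
      (hasDerivAt_negMulCot (sin_pos_of_mem_Ioo hx).ne').continuousAt.continuousWithinAt)
    tendsto_negMulCot_nhdsGT_zero tendsto_negMulCot_nhdsLT_pi

lemma negMulCot_sq_add_sq {x : ℝ} (hx : sin x ≠ 0) :
    negMulCot x ^ 2 + x ^ 2 = (x / sin x) ^ 2 := by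
  rw [negMulCot]
  field_simp
  linear_combination x ^ 2 * sin_sq_add_cos_sq x

theorem statement10 :
    (∀ z : ℝ, -1 < z →
      ∃! ν : ℝ, ν ∈ Ioo 0 π ∧ -(ν * (Real.cos ν / Real.sin ν)) = z) ∧
    ∀ ν : ℝ → ℝ,
      (∀ z : ℝ, -1 < z →
        ν z ∈ Ioo 0 π ∧ -(ν z * (Real.cos (ν z) / Real.sin (ν z))) = z) →
      StrictMonoOn ν (Ioi (-1)) ∧
      (∀ z : ℝ, -1 < z → z ^ 2 + ν z ^ 2 = (ν z / Real.sin (ν z)) ^ 2) ∧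
      MonotoneOn (fun z => z ^ 2 + ν z ^ 2) (Ioi (-1)) := by
  refine ⟨fun z hz => ?_, fun ν hν => ?_⟩
  · obtain ⟨x, hx, rfl⟩ := Ioi_subset_image_negMulCot hz
    exact ⟨x, ⟨hx, rfl⟩, fun y hy => strictMonoOn_negMulCot.injOn hy.1 hx hy.2⟩
  have hνmono : StrictMonoOn ν (Ioi (-1)) := fun z₁ h₁ z₂ h₂ hlt =>
    (strictMonoOn_negMulCot.lt_iff_lt (hν z₁ h₁).1 (hν z₂ h₂).1).1 <| by
      simpa only [negMulCot, (hν z₁ h₁).2, (hν z₂ h₂).2] using hlt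
  have hsq : ∀ z : ℝ, -1 < z → z ^ 2 + ν z ^ 2 = (ν z / sin (ν z)) ^ 2 := fun z hz => by
    simpa only [negMulCot, (hν z hz).2] using
      negMulCot_sq_add_sq (sin_pos_of_mem_Ioo (hν z hz).1).ne'
  refine ⟨hνmono, hsq, fun z₁ h₁ z₂ h₂ hle => ?_⟩
  have hm₁ := (hν z₁ h₁).1
  have hm₂ := (hν z₂ h₂).1
  simp only [hsq z₁ h₁, hsq z₂ h₂]
  exact pow_le_pow_left₀ (div_pos hm₁.1 (sin_pos_of_mem_Ioo hm₁)).le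
    (strictMonoOn_div_sin.monotoneOn hm₁ hm₂ (hνmono.monotoneOn h₁ h₂ hle)) 2
end

section
/- Let m : [0,∞) → (0,∞) be such that log m is concave and m(0) ≥ 1, let ω ∈ ℝ and r ≥ 0, and let a* ∈ (0,∞] be a number such that m(2a*) ≤ m(a*)² (e.g. the first hitting time of 1 by the solution of the Riccati equation φ′ = r(φ² + 2μφ + 1), φ(0) = 0, with μ = (1/r)((log m)′ − ω)). Define U(t) = m(t) for 0 ≤ t ≤ 2a* and U(t) = min{ m(t), e^{(ω − r)(t − 2a*)} m(a*)² } for t > 2a* (and U = m if a* = +∞). Then log U is concave on [0,∞). -/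
/-!
Taking logarithms, `log U` agrees with the concave function `h = log m` up to `w = 2 a*` and is
the minimum of `h` and an affine function `ℓ` with `h w ≤ ℓ w` afterwards. Such a function is
concave: a chord of it lies below `h`, and when its middle point lies beyond `w` it also lies below
`ℓ`: a chord starting before `w` is dominated at `w` by a chord of `h`, hence by `ℓ w`, and at
its right end by `ℓ`, so the concave `ℓ` stays above it in between.
-/

open Set

noncomputable def minAfter (w : ℝ) (h ℓ : ℝ → ℝ) (t : ℝ) : ℝ :=
  if t ≤ w then h t else min (h t) (ℓ t)

section minAfter

variable {S : Set ℝ} {h ℓ : ℝ → ℝ} {w : ℝ}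

lemma minAfter_of_le {t : ℝ} (ht : t ≤ w) : minAfter w h ℓ t = h t := if_pos ht

lemma minAfter_of_lt {t : ℝ} (ht : w < t) : minAfter w h ℓ t = min (h t) (ℓ t) :=
  if_neg ht.not_ge

lemma minAfter_le_left (t : ℝ) : minAfter w h ℓ t ≤ h t := by
  unfold minAfter
  split_ifs
  exacts [le_rfl, min_le_left _ _]

lemma minAfter_le_right (hw : h w ≤ ℓ w) {t : ℝ} (ht : w ≤ t) : minAfter w h ℓ t ≤ ℓ t := by
  rcases ht.eq_or_lt with rfl | ht
  · rwa [minAfter_of_le le_rfl]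
  · rw [minAfter_of_lt ht]
    exact min_le_right _ _

lemma ConcaveOn.mul_add_mul_le_of_lt_of_lt (hh : ConcaveOn ℝ S h) (hℓ : ConcaveOn ℝ S ℓ)
    {x y v p q : ℝ} (hx : x ∈ S) (hy : y ∈ S) (hw : h w ≤ ℓ w) (hvh : v ≤ h y) (hvℓ : v ≤ ℓ y)
    (hp : 0 ≤ p) (hq : 0 ≤ q) (hpq : p + q = 1) (hxw : x < w) (hwz : w < p * x + q * y) :
    p * h x + q * v ≤ ℓ (p * x + q * y) := by
  obtain rfl : q = 1 - p := eq_sub_of_add_eq' hpq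
  set z := p * x + (1 - p) * y with hz
  have hwy : w < y := by
    by_contra! hyw
    nlinarith [mul_le_mul_of_nonneg_left hxw.le hp, mul_le_mul_of_nonneg_left hyw hq]
  have hxy : x < y := hxw.trans hwy
  have hzy : z ≤ y := by nlinarith [mul_le_mul_of_nonneg_left hxy.le hp]
  have hyx0 : y - x ≠ 0 := by linarith
  have hyw0 : y - w ≠ 0 := by linarith
  -- `w = a x + (1 - a) y` and `z = α w + (1 - α) y`, so that `p = α a`.
  set a := (y - w) / (y - x)
  set α := (y - z) / (y - w)
  have ha : 0 ≤ a := div_nonneg (by linarith) (by linarith)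
  have ha1 : 0 ≤ 1 - a := sub_nonneg.2 (div_le_one_of_le₀ (by linarith) (by linarith))
  have hα : 0 ≤ α := div_nonneg (by linarith) (by linarith)
  have hα1 : 0 ≤ 1 - α := sub_nonneg.2 (div_le_one_of_le₀ (by linarith) (by linarith))
  have hw_eq : a * x + (1 - a) * y = w := by
    simp only [a]; field_simp; ring
  have hz_eq : α * w + (1 - α) * y = z := by
    simp only [α]; field_simp; ring
  have hp_eq : p = α * a := by
    simp only [α, a]; field_simp; rw [hz]; ring
  have hwS : w ∈ S := hh.1.ordConnected.out hx hy ⟨hxw.le, hwy.le⟩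
  have hhw : a * h x + (1 - a) * h y ≤ h w := by
    simpa only [smul_eq_mul, hw_eq] using hh.2 hx hy ha ha1 (by ring)
  have hℓz : α * ℓ w + (1 - α) * ℓ y ≤ ℓ z := by
    simpa only [smul_eq_mul, hz_eq] using hℓ.2 hwS hy hα hα1 (by ring)
  calc p * h x + (1 - p) * v = α * (a * h x + (1 - a) * v) + (1 - α) * v := by
        rw [hp_eq]; ring
    _ ≤ α * (a * h x + (1 - a) * h y) + (1 - α) * ℓ y := by gcongr
    _ ≤ α * ℓ w + (1 - α) * ℓ y := by gcongr; exact hhw.trans hw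
    _ ≤ ℓ z := hℓz

theorem concaveOn_minAfter (hh : ConcaveOn ℝ S h) (hℓ : ConcaveOn ℝ S ℓ) (hw : h w ≤ ℓ w) :
    ConcaveOn ℝ S (minAfter w h ℓ) := by
  refine LinearOrder.concaveOn_of_lt hh.1 fun x hx y hy hxy p q hp hq hpq => ?_
  simp only [smul_eq_mul]
  obtain rfl : q = 1 - p := eq_sub_of_add_eq' hpq
  have below_h : p * minAfter w h ℓ x + (1 - p) * minAfter w h ℓ y ≤ h (p * x + (1 - p) * y) :=
    calc _ ≤ p * h x + (1 - p) * h y := by gcongr <;> exact minAfter_le_left _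
      _ ≤ h (p * x + (1 - p) * y) := by simpa only [smul_eq_mul] using hh.2 hx hy hp.le hq.le hpq
  rcases le_or_gt (p * x + (1 - p) * y) w with hz | hz
  · rwa [minAfter_of_le hz]
  refine (minAfter_of_lt hz).ge.trans' (le_min below_h ?_)
  rcases lt_or_ge x w with hxw | hwx
  · have hwy : w ≤ y := by nlinarith [mul_le_mul_of_nonneg_left hxy.le hp.le]
    rw [minAfter_of_le hxw.le]
    exact hh.mul_add_mul_le_of_lt_of_lt hℓ hx hy hw (minAfter_le_left y)
      (minAfter_le_right hw hwy) hp.le hq.le hpq hxw hz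
  · calc _ ≤ p * ℓ x + (1 - p) * ℓ y := by
          gcongr <;> exact minAfter_le_right hw (by linarith)
      _ ≤ ℓ (p * x + (1 - p) * y) := by simpa only [smul_eq_mul] using hℓ.2 hx hy hp.le hq.le hpq

end minAfter

lemma concaveOn_mul_sub_add (S : Set ℝ) (hS : Convex ℝ S) (s w c : ℝ) :
    ConcaveOn ℝ S fun t => s * (t - w) + c :=
  ⟨hS, fun x _ y _ p q _ _ hpq => le_of_eq <| by
    simp only [smul_eq_mul]; linear_combination (c - s * w) * hpq⟩

lemma Real.log_min {a b : ℝ} (ha : 0 < a) (hb : 0 < b) :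
    Real.log (min a b) = min (Real.log a) (Real.log b) := by
  rcases le_total a b with hab | hab
  · rw [min_eq_left hab, min_eq_left (Real.log_le_log ha hab)]
  · rw [min_eq_right hab, min_eq_right (Real.log_le_log hb hab)]

theorem statement15_general (m : ℝ → ℝ) (hpos : ∀ t, 0 ≤ t → 0 < m t)
    (hconc : ConcaveOn ℝ (Ici 0) (fun t => Real.log (m t)))
    (ω r : ℝ)
    (astar : ℝ) (ha : 0 < astar) (hsub : m (2 * astar) ≤ m astar ^ 2)
    (U : ℝ → ℝ)
    (hU : ∀ t, U t = if t ≤ 2 * astar then m t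
      else min (m t) (Real.exp ((ω - r) * (t - 2 * astar)) * m astar ^ 2)) :
    ConcaveOn ℝ (Ici 0) (fun t => Real.log (U t)) := by
  set ℓ := fun t => (ω - r) * (t - 2 * astar) + Real.log (m astar ^ 2)
  have hm_astar : 0 < m astar := hpos astar ha.le
  have hw : Real.log (m (2 * astar)) ≤ ℓ (2 * astar) := by
    simpa [ℓ] using Real.log_le_log (hpos _ (by positivity)) hsub
  refine (concaveOn_minAfter hconc (concaveOn_mul_sub_add _ (convex_Ici 0) _ _ _) hw).congr
    fun t (ht : 0 ≤ t) => ?_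
  rw [hU t, minAfter]
  split_ifs
  · rfl
  · rw [Real.log_min (hpos t ht) (by positivity), Real.log_mul (by positivity) (by positivity),
      Real.log_exp]

/-- The updated upper bound `U` produced from a log-concave bound `m` is again
log-concave. -/
theorem statement15 (m : ℝ → ℝ) (hpos : ∀ t, 0 ≤ t → 0 < m t)
    (hconc : ConcaveOn ℝ (Ici 0) (fun t => Real.log (m t)))
    (h0 : 1 ≤ m 0) (ω r : ℝ) (hr : 0 ≤ r)
    (astar : ℝ) (ha : 0 < astar) (hsub : m (2 * astar) ≤ m astar ^ 2)
    (U : ℝ → ℝ)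
    (hU : ∀ t, U t = if t ≤ 2 * astar then m t
      else min (m t) (Real.exp ((ω - r) * (t - 2 * astar)) * m astar ^ 2)) :
    ConcaveOn ℝ (Ici 0) (fun t => Real.log (U t)) :=
  statement15_general m hpos hconc ω r astar ha hsub U hU
end

section
/- For ω ∈ ℝ define r(ω) as follows: if ω > −1, r(ω) = ν/ sin ν where ν ∈ (0, π) is the unique solution of −ν cot ν = ω; if ω = −1, r(ω) = 1; if ω < −1, r(ω) = η / sinh η where η ∈ (0, +∞) is the unique solution of −η coth η = ω. Let φ solve φ′(t) = r(ω) ( φ(t)² + 2 μ₀ φ(t) + 1 ) with φ(0) = 0, where μ₀ = −ω / r(ω). Then the first time t > 0 with φ(t) = 1 is exactly t = 1/2, for every ω ∈ ℝ. -/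
open Set Real

/-- `r = r(ω)` for the differentiation operator on `(0,1)`: `r = ν/sin ν` with
`−ν cot ν = ω`, `ν ∈ (0,π)`, if `ω > −1`; `r = 1` if `ω = −1`; and `r = η/sinh η` with
`−η coth η = ω`, `η > 0`, if `ω < −1`. -/
def IsDiffOpResolventValue (ω r : ℝ) : Prop :=
  (-1 < ω ∧ ∃ ν : ℝ, ν ∈ Ioo 0 π ∧
      -(ν * (Real.cos ν / Real.sin ν)) = ω ∧ r = ν / Real.sin ν) ∨
  (ω = -1 ∧ r = 1) ∨
  (ω < -1 ∧ ∃ η : ℝ, 0 < η ∧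
      -(η * (Real.cosh η / Real.sinh η)) = ω ∧ r = η / Real.sinh η)

/-!
Write `(s, c)` for `(sin, cos)`, `(id, 1)` or `(sinh, cosh)` according to the three cases, so that
`r = ν / s ν` and `μ₀ = c ν` (with `ν = 1` in the middle case and `ν = η` in the last). Then
`t ↦ s (ν t) / s (ν (1 - t))` solves the Riccati equation: the addition formula for `s` turns the
numerator of its derivative into `ν s ν`, and the identity
`s (a + b)² = s a² + 2 c (a + b) s a s b + s b²` matches this with the right-hand side. Being `< 1`
exactly while `ν t < ν (1 - t)`, it first reaches `1` at `t = 1/2`, and it is `φ` because the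
Riccati vector field is `C¹`, hence Lipschitz on the bounded set swept out by both solutions.
-/

theorem eqOn_Icc_of_hasDerivWithinAt_of_contDiff {E : Type*} [NormedAddCommGroup E]
    [NormedSpace ℝ E] [ProperSpace E] {v : E → E} (hv : ContDiff ℝ 1 v) {f g : ℝ → E} {a b : ℝ}
    (hf : ∀ t ∈ Icc a b, HasDerivWithinAt f (v (f t)) (Icc a b) t)
    (hg : ∀ t ∈ Icc a b, HasDerivWithinAt g (v (g t)) (Icc a b) t) (ha : f a = g a) :
    EqOn f g (Icc a b) := by
  have hfc : ContinuousOn f (Icc a b) := fun t ht ↦ (hf t ht).continuousWithinAt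
  have hgc : ContinuousOn g (Icc a b) := fun t ht ↦ (hg t ht).continuousWithinAt
  obtain ⟨Cf, hCf⟩ := isCompact_Icc.exists_bound_of_continuousOn hfc
  obtain ⟨Cg, hCg⟩ := isCompact_Icc.exists_bound_of_continuousOn hgc
  set C := max Cf Cg
  obtain ⟨K, hK⟩ := hv.contDiffOn.exists_lipschitzOnWith one_ne_zero
    (convex_closedBall (0 : E) C) (isCompact_closedBall 0 C)
  have hright : ∀ {h : ℝ → E}, (∀ t ∈ Icc a b, HasDerivWithinAt h (v (h t)) (Icc a b) t) →
      ∀ t ∈ Ico a b, HasDerivWithinAt h (v (h t)) (Ici t) t := fun hh t ht ↦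
    (hh t (Ico_subset_Icc_self ht)).mono_of_mem_nhdsWithin (Icc_mem_nhdsGE_of_mem ht)
  exact ODE_solution_unique_of_mem_Icc_right (v := fun _ ↦ v) (s := fun _ ↦ Metric.closedBall 0 C)
    (fun _ _ ↦ hK) hfc (hright hf)
    (fun t ht ↦ mem_closedBall_zero_iff.2 ((hCf t (Ico_subset_Icc_self ht)).trans le_sup_left))
    hgc (hright hg)
    (fun t ht ↦ mem_closedBall_zero_iff.2 ((hCg t (Ico_subset_Icc_self ht)).trans le_sup_right))
    ha

theorem Real.sin_add_sq (a b : ℝ) :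
    sin (a + b) ^ 2 = sin a ^ 2 + 2 * cos (a + b) * sin a * sin b + sin b ^ 2 := by
  rw [sin_add, cos_add]
  linear_combination sin a ^ 2 * sin_sq_add_cos_sq b + sin b ^ 2 * sin_sq_add_cos_sq a

theorem Real.sinh_add_sq (a b : ℝ) :
    sinh (a + b) ^ 2 = sinh a ^ 2 + 2 * cosh (a + b) * sinh a * sinh b + sinh b ^ 2 := by
  rw [sinh_add, cosh_add]
  linear_combination sinh b ^ 2 * cosh_sq a + sinh a ^ 2 * cosh_sq b

theorem Real.sin_lt_sin_of_add_lt_pi {x y : ℝ} (hx : 0 ≤ x) (hxy : x < y) (h : x + y < π) :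
    sin x < sin y := by
  have hsin : 0 < sin ((y - x) / 2) := sin_pos_of_pos_of_lt_pi (by linarith) (by linarith)
  have hcos : 0 < cos ((y + x) / 2) := cos_pos_of_mem_Ioo ⟨by linarith, by linarith⟩
  rw [← sub_pos, sin_sub_sin]
  positivity

noncomputable def sineRatio (s : ℝ → ℝ) (ν t : ℝ) : ℝ := s (ν * t) / s (ν * (1 - t))

theorem hasDerivAt_sineRatio {s c : ℝ → ℝ} (hs : ∀ x, HasDerivAt s (c x) x)
    (hadd : ∀ a b, s (a + b) = s a * c b + c a * s b)
    (hsq : ∀ a b, s (a + b) ^ 2 = s a ^ 2 + 2 * c (a + b) * s a * s b + s b ^ 2)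
    {ν t : ℝ} (hν : s ν ≠ 0) (ht : s (ν * (1 - t)) ≠ 0) :
    HasDerivAt (sineRatio s ν)
      (ν / s ν * (sineRatio s ν t ^ 2 + 2 * c ν * sineRatio s ν t + 1)) t := by
  have hnum : HasDerivAt (fun t ↦ s (ν * t)) (c (ν * t) * ν) t := by
    simpa [Function.comp_def] using (hs (ν * t)).comp t ((hasDerivAt_id t).const_mul ν)
  have hden : HasDerivAt (fun t ↦ s (ν * (1 - t))) (c (ν * (1 - t)) * -ν) t := by
    simpa [Function.comp_def] using
      (hs (ν * (1 - t))).comp t (((hasDerivAt_id t).const_sub 1).const_mul ν)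
  have hsplit : ν * t + ν * (1 - t) = ν := by ring
  have hadd' := hadd (ν * t) (ν * (1 - t))
  have hsq' := hsq (ν * t) (ν * (1 - t))
  rw [hsplit] at hadd' hsq'
  refine (hnum.div hden ht).congr_deriv ?_
  unfold sineRatio
  field_simp
  linear_combination (-ν * s ν) * hadd' + ν * hsq'

theorem riccati_eq_one_at_half_of_sineRatio {s c : ℝ → ℝ} (hs : ∀ x, HasDerivAt s (c x) x)
    (hs0 : s 0 = 0) (hadd : ∀ a b, s (a + b) = s a * c b + c a * s b)
    (hsq : ∀ a b, s (a + b) ^ 2 = s a ^ 2 + 2 * c (a + b) * s a * s b + s b ^ 2)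
    {ν : ℝ} (hν : 0 < ν) (hpos : ∀ x ∈ Ioc 0 ν, 0 < s x)
    (hlt : ∀ x y, 0 ≤ x → x < y → x + y = ν → s x < s y)
    {r μ : ℝ} (hr : r = ν / s ν) (hμ : μ = c ν) {φ : ℝ → ℝ} (hφ0 : φ 0 = 0)
    (hφ : ∀ t ∈ Icc (0:ℝ) (1/2),
      HasDerivWithinAt φ (r * (φ t ^ 2 + 2 * μ * φ t + 1)) (Icc 0 (1/2)) t) :
    φ (1/2) = 1 ∧ ∀ t ∈ Ico (0:ℝ) (1/2), φ t < 1 := by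
  have hden : ∀ t ∈ Icc (0:ℝ) (1/2), 0 < s (ν * (1 - t)) := fun t ht ↦
    hpos _ ⟨by nlinarith [ht.2], by nlinarith [ht.1]⟩
  have hsν : s ν ≠ 0 := (hpos ν ⟨hν, le_rfl⟩).ne'
  have hφ_eq : EqOn φ (sineRatio s ν) (Icc 0 (1/2)) := by
    subst hr hμ
    refine eqOn_Icc_of_hasDerivWithinAt_of_contDiff
      (v := fun y ↦ ν / s ν * (y ^ 2 + 2 * c ν * y + 1)) (by fun_prop) hφ (fun t ht ↦ ?_)
      (by simp [sineRatio, hφ0, hs0])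
    exact (hasDerivAt_sineRatio hs hadd hsq hsν (hden t ht).ne').hasDerivWithinAt
  have hhalf : (1/2 : ℝ) ∈ Icc (0:ℝ) (1/2) := by norm_num
  refine ⟨?_, fun t ht ↦ ?_⟩
  · rw [hφ_eq hhalf, sineRatio, show (1 : ℝ) - 1/2 = 1/2 by norm_num]
    exact div_self (hpos _ ⟨by positivity, by linarith⟩).ne'
  · rw [hφ_eq (Ico_subset_Icc_self ht), sineRatio, div_lt_one (hden t (Ico_subset_Icc_self ht))]
    exact hlt _ _ (by nlinarith [ht.1]) (by nlinarith [ht.2]) (by ring)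

/-- For the differentiation operator on `(0,1)` and the constant bound `m₀ ≡ 1`, the
solution of `φ′ = r(ω)(φ² + 2μ₀φ + 1)`, `φ(0) = 0`, `μ₀ = −ω/r(ω)`, first reaches `1`
exactly at time `t = 1/2`, for every `ω ∈ ℝ`. -/
theorem statement18 (ω r μ₀ : ℝ) (hr : IsDiffOpResolventValue ω r)
    (hμ₀ : μ₀ = -ω / r)
    (φ : ℝ → ℝ) (hφ0 : φ 0 = 0)
    (hφ : ∀ t ∈ Icc (0:ℝ) (1/2),
      HasDerivWithinAt φ (r * (φ t ^ 2 + 2 * μ₀ * φ t + 1)) (Icc 0 (1/2)) t) :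
    φ (1/2) = 1 ∧ ∀ t ∈ Ico (0:ℝ) (1/2), φ t < 1 := by
  rcases hr with ⟨-, ν, hν, hων, hrν⟩ | ⟨hω, hr1⟩ | ⟨-, η, hη, hωη, hrη⟩
  · refine riccati_eq_one_at_half_of_sineRatio hasDerivAt_sin sin_zero sin_add sin_add_sq hν.1
      (fun x hx ↦ sin_pos_of_pos_of_lt_pi hx.1 (hx.2.trans_lt hν.2))
      (fun x y hx hxy hsum ↦ sin_lt_sin_of_add_lt_pi hx hxy (hsum ▸ hν.2)) hrν ?_ hφ0 hφ
    rw [hμ₀, ← hων, hrν]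
    field_simp [hν.1.ne', (sin_pos_of_pos_of_lt_pi hν.1 hν.2).ne']
  · refine riccati_eq_one_at_half_of_sineRatio (s := id) (c := fun _ ↦ 1) (ν := 1)
      hasDerivAt_id rfl (fun a b ↦ by simp) (fun a b ↦ by simp only [id]; ring) one_pos
      (fun x hx ↦ hx.1) (fun x y _ hxy _ ↦ hxy) (by simp [hr1]) ?_ hφ0 hφ
    rw [hμ₀, hω, hr1]
    norm_num
  · refine riccati_eq_one_at_half_of_sineRatio hasDerivAt_sinh sinh_zero sinh_add sinh_add_sq hη
      (fun x hx ↦ sinh_pos_iff.2 hx.1) (fun x y _ hxy _ ↦ sinh_lt_sinh.2 hxy) hrη ?_ hφ0 hφ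
    rw [hμ₀, ← hωη, hrη]
    field_simp
end

section
/- For ω ∈ ℝ define r(ω) as follows: if ω > −1, r(ω) = ν / sin ν where ν ∈ (0, π) is the unique solution of −ν cot ν = ω; if ω = −1, r(ω) = 1; if ω < −1, r(ω) = η / sinh η where η ∈ (0, +∞) is the unique solution of −η coth η = ω. Fix α > 0 and ω ∈ ℝ, and set r* = (1/(2α)) r(2αω). Then the solution φ of φ′(t) = r* φ(t)² − 2 ω φ(t) + r*, φ(0) = 0, first reaches the value 1 at time t = α; that is, a*(m₀, ω, r*) = α where m₀ ≡ 1. In other words, r*(α, ω) = (1/(2α)) r(2αω), where r*(α, ω) denotes the unique r > 0 with a*(m₀, ω, r) = α. -/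
open Set Real

/-!
The difference `d = ψ - φ` of a solution `ψ` of `ψ′ = r'ψ² − 2ωψ + r'` and a solution `φ` of
`φ′ = rφ² − 2ωφ + r` satisfies the linear equation `d′ = (r'(ψ + φ) − 2ω) d + (r' − r)(φ² + 1)`,
so the integrating factor `exp (−∫ (r'(ψ + φ) − 2ω))` shows `d ≥ 0` when `r ≤ r'` and `d(α) > 0`
when `r < r'`. Hence solutions are unique and their value at `α` determines `r`.

It remains to exhibit a solution for `r*` reaching `1` first at `α`. Writing `φ = u / v` turns the
Riccati equation into the linear system `u′ = r v − ω u`, `v′ = ω v − r u`. With `k = ν / (2α)`,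
`u = sin (k t)`, `v = sin (ν − k t)` solve it for `ω = −k cot ν`, `r = k / sin ν`, and `u = v`
first when `k t = ν / 2`, i.e. `t = α`; `sinh` replaces `sin` when `2αω < −1`, and `u = t`,
`v = 2α − t` serve when `2αω = −1`.
-/

section LinearDifferentialInequality

variable {a b : ℝ} {e L q : ℝ → ℝ}

lemma exists_hasDerivWithinAt_Icc_of_continuousOn (hab : a ≤ b) (hL : ContinuousOn L (Icc a b)) :
    ∃ Λ : ℝ → ℝ, ∀ t ∈ Icc a b, HasDerivWithinAt Λ (L t) (Icc a b) t := by
  have hc : Continuous (IccExtend hab ((Icc a b).domRestrict L)) := hL.domRestrict.Icc_extend'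
  refine ⟨fun t => ∫ s in a..t, IccExtend hab ((Icc a b).domRestrict L) s, fun t ht => ?_⟩
  have := (hc.integral_hasStrictDerivAt a t).hasDerivAt.hasDerivWithinAt (s := Icc a b)
  rwa [IccExtend_of_mem _ _ ht] at this

lemma hasDerivWithinAt_mul_exp_neg_of_linear {Λ : ℝ → ℝ} {s : Set ℝ} {t : ℝ}
    (he : HasDerivWithinAt e (L t * e t + q t) s t) (hΛ : HasDerivWithinAt Λ (L t) s t) :
    HasDerivWithinAt (fun x => e x * exp (-Λ x)) (q t * exp (-Λ t)) s t :=
  (he.mul hΛ.neg.exp).congr_deriv (by rw [Pi.neg_apply]; ring)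

lemma nonneg_of_hasDerivWithinAt_linear (hL : ContinuousOn L (Icc a b)) (he0 : e a = 0)
    (he : ∀ t ∈ Icc a b, HasDerivWithinAt e (L t * e t + q t) (Icc a b) t)
    (hq : ∀ t ∈ Ioo a b, 0 ≤ q t) : ∀ t ∈ Icc a b, 0 ≤ e t := by
  intro t ht
  obtain ⟨Λ, hΛ⟩ := exists_hasDerivWithinAt_Icc_of_continuousOn (ht.1.trans ht.2) hL
  have hf t ht := hasDerivWithinAt_mul_exp_neg_of_linear (he t ht) (hΛ t ht)
  have hmono : MonotoneOn (fun x => e x * exp (-Λ x)) (Icc a b) := by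
    refine monotoneOn_of_hasDerivWithinAt_nonneg (convex_Icc a b) (f' := fun x => q x * exp (-Λ x))
      (fun x hx => (hf x hx).continuousWithinAt) ?_ ?_ <;> rw [interior_Icc]
    · exact fun x hx => (hf x (Ioo_subset_Icc_self hx)).mono Ioo_subset_Icc_self
    · exact fun x hx => mul_nonneg (hq x hx) (exp_pos _).le
  have := hmono (left_mem_Icc.2 (ht.1.trans ht.2)) ht ht.1
  simp only [he0, zero_mul] at this
  exact nonneg_of_mul_nonneg_left this (exp_pos _)

lemma pos_of_hasDerivWithinAt_linear (hab : a < b) (hL : ContinuousOn L (Icc a b)) (he0 : e a = 0)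
    (he : ∀ t ∈ Icc a b, HasDerivWithinAt e (L t * e t + q t) (Icc a b) t)
    (hq : ∀ t ∈ Ioo a b, 0 < q t) : 0 < e b := by
  obtain ⟨Λ, hΛ⟩ := exists_hasDerivWithinAt_Icc_of_continuousOn hab.le hL
  have hf t ht := hasDerivWithinAt_mul_exp_neg_of_linear (he t ht) (hΛ t ht)
  have hmono : StrictMonoOn (fun x => e x * exp (-Λ x)) (Icc a b) := by
    refine strictMonoOn_of_hasDerivWithinAt_pos (convex_Icc a b) (f' := fun x => q x * exp (-Λ x))
      (fun x hx => (hf x hx).continuousWithinAt) ?_ ?_ <;> rw [interior_Icc]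
    · exact fun x hx => (hf x (Ioo_subset_Icc_self hx)).mono Ioo_subset_Icc_self
    · exact fun x hx => mul_pos (hq x hx) (exp_pos _)
  have := hmono (left_mem_Icc.2 hab.le) (right_mem_Icc.2 hab.le) hab
  simp only [he0, zero_mul] at this
  exact pos_of_mul_pos_left this (exp_pos _).le

end LinearDifferentialInequality

def IsRiccatiSolution (r ω α : ℝ) (φ : ℝ → ℝ) : Prop :=
  φ 0 = 0 ∧ ∀ t ∈ Icc 0 α, HasDerivWithinAt φ (r * φ t ^ 2 - 2 * ω * φ t + r) (Icc 0 α) t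

/-- `FirstReachesOneAt φ α` for the solution `φ` with coefficient `r` is the paper's
`a*(m₀, ω, r) = α`. -/
def FirstReachesOneAt (φ : ℝ → ℝ) (α : ℝ) : Prop :=
  φ α = 1 ∧ ∀ t ∈ Ico 0 α, φ t < 1

namespace IsRiccatiSolution

variable {r r' ω α : ℝ} {φ ψ : ℝ → ℝ}

lemma continuousOn (hφ : IsRiccatiSolution r ω α φ) : ContinuousOn φ (Icc 0 α) :=
  fun t ht => (hφ.2 t ht).continuousWithinAt

lemma hasDerivWithinAt_sub (hφ : IsRiccatiSolution r ω α φ) (hψ : IsRiccatiSolution r' ω α ψ)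
    {t : ℝ} (ht : t ∈ Icc 0 α) :
    HasDerivWithinAt (fun s => ψ s - φ s)
      ((r' * (ψ t + φ t) - 2 * ω) * (ψ t - φ t) + (r' - r) * (φ t ^ 2 + 1)) (Icc 0 α) t :=
  ((hψ.2 t ht).sub (hφ.2 t ht)).congr_deriv (by ring)

lemma continuousOn_linearCoeff (hφ : IsRiccatiSolution r ω α φ)
    (hψ : IsRiccatiSolution r' ω α ψ) :
    ContinuousOn (fun s => r' * (ψ s + φ s) - 2 * ω) (Icc 0 α) := by
  have := hψ.continuousOn
  have := hφ.continuousOn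
  fun_prop

lemma le (hφ : IsRiccatiSolution r ω α φ) (hψ : IsRiccatiSolution r' ω α ψ) (hr : r ≤ r') :
    ∀ t ∈ Icc 0 α, φ t ≤ ψ t := fun t ht => by
  have := nonneg_of_hasDerivWithinAt_linear (hφ.continuousOn_linearCoeff hψ)
    (by simp [hφ.1, hψ.1]) (fun s hs => hφ.hasDerivWithinAt_sub hψ hs)
    (fun s _ => mul_nonneg (sub_nonneg.2 hr) (by positivity)) t ht
  linarith

lemma lt (hφ : IsRiccatiSolution r ω α φ) (hψ : IsRiccatiSolution r' ω α ψ) (hα : 0 < α)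
    (hr : r < r') : φ α < ψ α := by
  have := pos_of_hasDerivWithinAt_linear hα (hφ.continuousOn_linearCoeff hψ)
    (by simp [hφ.1, hψ.1]) (fun s hs => hφ.hasDerivWithinAt_sub hψ hs)
    (fun s _ => mul_pos (sub_pos.2 hr) (by positivity))
  linarith

lemma eqOn (hφ : IsRiccatiSolution r ω α φ) (hψ : IsRiccatiSolution r ω α ψ) :
    EqOn φ ψ (Icc 0 α) :=
  fun t ht => le_antisymm (hφ.le hψ le_rfl t ht) (hψ.le hφ le_rfl t ht)

lemma coeff_eq_of_apply_eq (hφ : IsRiccatiSolution r ω α φ) (hψ : IsRiccatiSolution r' ω α ψ)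
    (hα : 0 < α) (h : φ α = ψ α) : r = r' := by
  rcases lt_trichotomy r r' with hr | rfl | hr
  · exact absurd h (hφ.lt hψ hα hr).ne
  · rfl
  · exact absurd h (hψ.lt hφ hα hr).ne'

end IsRiccatiSolution

lemma isRiccatiSolution_div {R ω α : ℝ} {u v : ℝ → ℝ} (hu0 : u 0 = 0)
    (hv : ∀ t ∈ Icc 0 α, v t ≠ 0)
    (hu : ∀ t ∈ Icc 0 α, HasDerivWithinAt u (R * v t - ω * u t) (Icc 0 α) t)
    (hv' : ∀ t ∈ Icc 0 α, HasDerivWithinAt v (ω * v t - R * u t) (Icc 0 α) t) :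
    IsRiccatiSolution R ω α (fun t => u t / v t) := by
  refine ⟨by simp [hu0], fun t ht => ((hu t ht).div (hv' t ht) (hv t ht)).congr_deriv ?_⟩
  field_simp [hv t ht]
  ring

lemma exists_isRiccatiSolution_of_linear {R ω α : ℝ} {u v : ℝ → ℝ} (hα : 0 ≤ α)
    (hu0 : u 0 = 0) (hv : ∀ t ∈ Icc 0 α, 0 < v t)
    (hu : ∀ t, HasDerivAt u (R * v t - ω * u t) t)
    (hv' : ∀ t, HasDerivAt v (ω * v t - R * u t) t)
    (huvα : u α = v α) (huv : ∀ t ∈ Ico 0 α, u t < v t) :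
    ∃ φ, IsRiccatiSolution R ω α φ ∧ FirstReachesOneAt φ α :=
  ⟨_, isRiccatiSolution_div hu0 (fun t ht => (hv t ht).ne')
      (fun t _ => (hu t).hasDerivWithinAt) (fun t _ => (hv' t).hasDerivWithinAt),
    (div_eq_one_iff_eq (hv α ⟨hα, le_rfl⟩).ne').2 huvα,
    fun t ht => (div_lt_one (hv t (Ico_subset_Icc_self ht))).2 (huv t ht)⟩

lemma exists_isRiccatiSolution_sin {α ω ν : ℝ} (hα : 0 < α) (hν : ν ∈ Ioo 0 π)
    (hω : -(ν * (cos ν / sin ν)) = 2 * α * ω) :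
    ∃ φ, IsRiccatiSolution (1 / (2 * α) * (ν / sin ν)) ω α φ ∧ FirstReachesOneAt φ α := by
  set k := ν / (2 * α) with hk_def
  have hsin : 0 < sin ν := sin_pos_of_pos_of_lt_pi hν.1 hν.2
  have hk : 0 < k := div_pos hν.1 (by positivity)
  have hkα : k * α = ν / 2 := by rw [hk_def]; field_simp
  have hR : 1 / (2 * α) * (ν / sin ν) = k / sin ν := by rw [hk_def]; field_simp
  have hω' : ω = -(k * cos ν) / sin ν := by
    rw [hk_def]; field_simp at hω ⊢; linarith
  rw [hR]
  refine exists_isRiccatiSolution_of_linear (u := fun t => sin (k * t))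
    (v := fun t => sin (ν - k * t)) hα.le (by simp) (fun t ht => ?_) (fun t => ?_) (fun t => ?_)
    (by simp only [hkα]; ring_nf) (fun t ht => ?_)
  · have : k * t ≤ ν / 2 := hkα ▸ mul_le_mul_of_nonneg_left ht.2 hk.le
    exact sin_pos_of_pos_of_lt_pi (by linarith [hν.1]) (by nlinarith [hν.2, ht.1])
  · refine (((hasDerivAt_id' t).const_mul k).sin).congr_deriv ?_
    rw [hω', sin_sub]
    field_simp
    ring
  · refine (((hasDerivAt_id' t).const_mul k).const_sub ν).sin.congr_deriv ?_
    rw [hω', sin_sub, cos_sub]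
    field_simp
    linear_combination -sin (k * t) * sin_sq_add_cos_sq ν
  · have ⟨h0, hlt⟩ : 0 ≤ k * t ∧ k * t < ν / 2 :=
      ⟨mul_nonneg hk.le ht.1, hkα ▸ mul_lt_mul_of_pos_left ht.2 hk⟩
    -- `sin (ν - x) - sin x = 2 sin (ν/2 - x) cos (ν/2)`
    have h1 : 0 < sin ((ν - k * t - k * t) / 2) :=
      sin_pos_of_pos_of_lt_pi (by linarith) (by linarith [hν.2])
    have h2 : 0 < cos ((ν - k * t + k * t) / 2) :=
      cos_pos_of_mem_Ioo ⟨by linarith [hν.1, pi_pos], by linarith [hν.2]⟩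
    have := sin_sub_sin (ν - k * t) (k * t)
    nlinarith

lemma exists_isRiccatiSolution_sinh {α ω η : ℝ} (hα : 0 < α) (hη : 0 < η)
    (hω : -(η * (cosh η / sinh η)) = 2 * α * ω) :
    ∃ φ, IsRiccatiSolution (1 / (2 * α) * (η / sinh η)) ω α φ ∧ FirstReachesOneAt φ α := by
  set k := η / (2 * α) with hk_def
  have hsinh : 0 < sinh η := sinh_pos_iff.2 hη
  have hk : 0 < k := div_pos hη (by positivity)
  have hkα : k * α = η / 2 := by rw [hk_def]; field_simp
  have hR : 1 / (2 * α) * (η / sinh η) = k / sinh η := by rw [hk_def]; field_simp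
  have hω' : ω = -(k * cosh η) / sinh η := by
    rw [hk_def]; field_simp at hω ⊢; linarith
  rw [hR]
  refine exists_isRiccatiSolution_of_linear (u := fun t => sinh (k * t))
    (v := fun t => sinh (η - k * t)) hα.le (by simp) (fun t ht => ?_) (fun t => ?_) (fun t => ?_)
    (by simp only [hkα]; ring_nf) (fun t ht => ?_)
  · exact sinh_pos_iff.2 (by nlinarith [ht.2])
  · refine (((hasDerivAt_id' t).const_mul k).sinh).congr_deriv ?_
    rw [hω', sinh_sub]
    field_simp
    ring
  · refine (((hasDerivAt_id' t).const_mul k).const_sub η).sinh.congr_deriv ?_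
    rw [hω', sinh_sub, cosh_sub]
    field_simp
    linear_combination -sinh (k * t) * cosh_sq η
  · exact sinh_lt_sinh.2 (by nlinarith [ht.2])

lemma exists_isRiccatiSolution_of_eq_neg_one {α ω : ℝ} (hα : 0 < α) (hω : 2 * α * ω = -1) :
    ∃ φ, IsRiccatiSolution (1 / (2 * α) * 1) ω α φ ∧ FirstReachesOneAt φ α := by
  have hω' : ω = -(1 / (2 * α)) := by field_simp; linarith
  refine exists_isRiccatiSolution_of_linear (u := fun t => t) (v := fun t => 2 * α - t) hα.le rfl
    (fun t ht => by linarith [ht.2]) (fun t => ?_) (fun t => ?_) (by ring)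
    (fun t ht => by linarith [ht.2])
  · refine (hasDerivAt_id t).congr_deriv ?_
    rw [hω']
    field_simp
    ring
  · refine ((hasDerivAt_id t).const_sub _).congr_deriv ?_
    rw [hω']
    field_simp
    ring

lemma exists_isRiccatiSolution_of_isDiffOpResolventValue {α ω rω : ℝ} (hα : 0 < α)
    (h : IsDiffOpResolventValue (2 * α * ω) rω) :
    ∃ φ, IsRiccatiSolution (1 / (2 * α) * rω) ω α φ ∧ FirstReachesOneAt φ α := by
  rcases h with ⟨-, ν, hν, hω, rfl⟩ | ⟨hω, rfl⟩ | ⟨-, η, hη, hω, rfl⟩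
  · exact exists_isRiccatiSolution_sin hα hν hω
  · exact exists_isRiccatiSolution_of_eq_neg_one hα hω
  · exact exists_isRiccatiSolution_sinh hα hη hω

/-- With `r* = (1/(2α)) r(2αω)`, the solution of `φ′ = r*φ² − 2ωφ + r*`, `φ(0) = 0`,
first reaches the value `1` exactly at time `t = α`; moreover `r*` is the unique
`r' > 0` with this property, i.e. `r*(α, ω) = (1/(2α)) r(2αω)`. -/
theorem statement19 (α ω rω rstar : ℝ) (hα : 0 < α)
    (hrω : IsDiffOpResolventValue (2 * α * ω) rω)
    (hrstar : rstar = (1 / (2 * α)) * rω)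
    (φ : ℝ → ℝ) (hφ0 : φ 0 = 0)
    (hφ : ∀ t ∈ Icc (0:ℝ) α,
      HasDerivWithinAt φ (rstar * φ t ^ 2 - 2 * ω * φ t + rstar) (Icc 0 α) t) :
    (φ α = 1 ∧ ∀ t ∈ Ico (0:ℝ) α, φ t < 1) ∧
    ∀ r' : ℝ, 0 < r' → ∀ ψ : ℝ → ℝ, ψ 0 = 0 →
      (∀ t ∈ Icc (0:ℝ) α,
        HasDerivWithinAt ψ (r' * ψ t ^ 2 - 2 * ω * ψ t + r') (Icc 0 α) t) →
      ψ α = 1 → (∀ t ∈ Ico (0:ℝ) α, ψ t < 1) → r' = rstar := by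
  subst hrstar
  have hφ : IsRiccatiSolution _ ω α φ := ⟨hφ0, hφ⟩
  obtain ⟨g, hg, hgα, hg_lt⟩ := exists_isRiccatiSolution_of_isDiffOpResolventValue hα hrω
  have hφg : EqOn φ g (Icc 0 α) := hφ.eqOn hg
  have hφα : φ α = 1 := hφg ⟨hα.le, le_rfl⟩ ▸ hgα
  refine ⟨⟨hφα, fun t ht => hφg (Ico_subset_Icc_self ht) ▸ hg_lt t ht⟩, ?_⟩
  intro r' _ ψ hψ0 hψ hψα _
  exact IsRiccatiSolution.coeff_eq_of_apply_eq ⟨hψ0, hψ⟩ hφ hα (hψα.trans hφα.symm)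
end
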